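/- Let H̃ be the affine Hecke algebra of the extended affine Weyl group W̃ of type A₂ over A = ℤ[v, v⁻¹], with basis T_w̃ and relations T_x T_y = T_{xy} when ℓ(x) + ℓ(y) = ℓ(xy) and (T_s − v)(T_s + v⁻¹) = 0 for simple s. If w̃, w̃′ ∈ W̃ are strongly conjugate (i.e. related by a chain of elementary strong conjugations w̃′ = x w̃ x⁻¹ with ℓ(w̃′) = ℓ(w̃) and ℓ(x w̃) = ℓ(x) + ℓ(w̃) or ℓ(w̃ x⁻¹) = ℓ(x) + ℓ(w̃)), then T_w̃ ≡ T_w̃′ modulo the commutator A-submodule [H̃, H̃]. -/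

import Mathlib

namespace A2

/-- Bundled data for the extended affine Weyl group `W̃ = P ⋊ W` of type `A₂` (for `PGL₃`),
presented as `W̃ = W_a ⋊ Ω` with simple reflections `s0, s1, s2`, length-zero element `tau`
generating `Ω ≅ ℤ/3`, translations `t (m, n) = t^(m α₁ + n α₂)` for coroot-lattice elements,
and the Iwahori–Matsumoto length function `len`. -/
class A2Data (G : Type*) [Group G] where
  s0 : G
  s1 : G
  s2 : G
  tau : G
  t : ℤ × ℤ → G
  len : G → ℕ
  s0_sq : s0 * s0 = 1
  s1_sq : s1 * s1 = 1
  s2_sq : s2 * s2 = 1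
  braid01 : (s0 * s1) ^ 3 = 1
  braid12 : (s1 * s2) ^ 3 = 1
  braid02 : (s0 * s2) ^ 3 = 1
  tau_cube : tau ^ 3 = 1
  tau_s0 : tau * s0 * tau⁻¹ = s1
  tau_s1 : tau * s1 * tau⁻¹ = s2
  tau_s2 : tau * s2 * tau⁻¹ = s0
  t_add : ∀ a b : ℤ × ℤ, t (a + b) = t a * t b
  s1_t : ∀ m n : ℤ, s1 * t (m, n) * s1⁻¹ = t (n - m, n)
  s2_t : ∀ m n : ℤ, s2 * t (m, n) * s2⁻¹ = t (m, m - n)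
  tau_t : ∀ m n : ℤ, tau * t (m, n) * tau⁻¹ = t (-n, m - n)
  s0_def : s0 = t (1, 1) * (s1 * s2 * s1)
  decomp : ∀ g : G, ∃ (m n : ℤ) (w : G) (j : Fin 3),
    w ∈ ({1, s1, s2, s1 * s2, s2 * s1, s1 * s2 * s1} : Set G) ∧
    g = t (m, n) * w * tau ^ (j : ℕ)
  len_t : ∀ m n : ℤ,
    len (t (m, n)) = (2*m - n).natAbs + (2*n - m).natAbs + (m + n).natAbs
  len_t_s1 : ∀ m n : ℤ,
    len (t (m, n) * s1) = (2*m - n - 1).natAbs + (2*n - m).natAbs + (m + n).natAbs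
  len_t_s2 : ∀ m n : ℤ,
    len (t (m, n) * s2) = (2*m - n).natAbs + (2*n - m - 1).natAbs + (m + n).natAbs
  len_t_s1s2 : ∀ m n : ℤ,
    len (t (m, n) * (s1 * s2)) =
      (2*m - n - 1).natAbs + (2*n - m).natAbs + (m + n - 1).natAbs
  len_t_s2s1 : ∀ m n : ℤ,
    len (t (m, n) * (s2 * s1)) =
      (2*m - n).natAbs + (2*n - m - 1).natAbs + (m + n - 1).natAbs
  len_t_s1s2s1 : ∀ m n : ℤ,
    len (t (m, n) * (s1 * s2 * s1)) =
      (2*m - n - 1).natAbs + (2*n - m - 1).natAbs + (m + n - 1).natAbs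
  len_mul_tau : ∀ g : G, len (g * tau) = len g
  len_tau_mul : ∀ g : G, len (tau * g) = len g

namespace A2Data

variable {G : Type*} [Group G] [A2Data G]

/-- The affine Weyl group `W_a`, the subgroup generated by the simple reflections. -/
def Wa (G : Type*) [Group G] [A2Data G] : Subgroup G :=
  Subgroup.closure {s0, s1, s2}

/-- `y` is `W̃`-conjugate to `x`. -/
def ConjTo (x y : G) : Prop := ∃ g : G, g * x * g⁻¹ = y

/-- The `W̃`-conjugacy class of `x`. -/
def conjClass (x : G) : Set G := {y | ConjTo x y}

def IsConjClass (S : Set G) : Prop := ∃ x : G, S = conjClass x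

/-- `n` is the minimal length of an element of `S`, attained on `S`. -/
def IsMinLen (S : Set G) (n : ℕ) : Prop :=
  (∃ x ∈ S, len x = n) ∧ ∀ x ∈ S, n ≤ len x

/-- The set of simple affine reflections. -/
def simples (G : Type*) [Group G] [A2Data G] : Set G := {s0, s1, s2}

/-- The class `𝕆₁ = {t^{kα₁}s₁, t^{kα₂}s₂, t^{k(α₁+α₂)}s₁s₂s₁ : k ∈ ℤ}`. -/
def O1set (G : Type*) [Group G] [A2Data G] : Set G :=
  {x | ∃ k : ℤ, x = t (k, 0) * s1 ∨ x = t (0, k) * s2 ∨ x = t (k, k) * (s1 * s2 * s1)}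

/-- The class `𝕆₂ = {t^λ s₁s₂, t^λ s₂s₁ : λ ∈ Q}`. -/
def O2set (G : Type*) [Group G] [A2Data G] : Set G :=
  {x | ∃ m n : ℤ, x = t (m, n) * (s1 * s2) ∨ x = t (m, n) * (s2 * s1)}

/-- `C_i = {t^{kα₁+iα₂}s₁, t^{-iα₁+kα₂}s₂, t^{kα₁+(k-i)α₂}s₁s₂s₁ : k ∈ ℤ}`. -/
def Ciset (G : Type*) [Group G] [A2Data G] (i : ℤ) : Set G :=
  {x | ∃ k : ℤ, x = t (k, i) * s1 ∨ x = t (-i, k) * s2 ∨ x = t (k, k - i) * (s1 * s2 * s1)}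

/-- `C'_i = {t^{kα₁-iα₂}s₁, t^{iα₁+kα₂}s₂, t^{(k-i)α₁+kα₂}s₁s₂s₁ : k ∈ ℤ}`. -/
def Ci'set (G : Type*) [Group G] [A2Data G] (i : ℤ) : Set G :=
  {x | ∃ k : ℤ, x = t (k, -i) * s1 ∨ x = t (i, k) * s2 ∨ x = t (k - i, k) * (s1 * s2 * s1)}

/-- `𝕆_{id,τ} = {t^{mα₁+nα₂}τ, t^{mα₁+nα₂}s₁s₂τ : m, n ∈ ℤ}`. -/
def OIdtau (G : Type*) [Group G] [A2Data G] : Set G :=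
  {x | ∃ m n : ℤ, x = t (m, n) * tau ∨ x = t (m, n) * (s1 * s2) * tau}

/-- `𝕆_{i,τ} = {t^{kα₁+iα₂}s₁s₂s₁τ, t^{(k+i-1)α₁+kα₂}s₂τ, t^{(1-i)α₁+kα₂}s₁τ : k ∈ ℤ}`. -/
def Oitau (G : Type*) [Group G] [A2Data G] (i : ℤ) : Set G :=
  {x | ∃ k : ℤ, x = t (k, i) * (s1 * s2 * s1) * tau ∨ x = t (k + i - 1, k) * s2 * tau ∨
    x = t (1 - i, k) * s1 * tau}

/-- One non-length-increasing conjugation step by a simple reflection. -/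
def StepTo (x y : G) : Prop :=
  ∃ s ∈ simples G, y = s * x * s ∧ len y ≤ len x

def RedTo : G → G → Prop := Relation.ReflTransGen StepTo

/-- The relation `≈` of the He–Nie reduction method. -/
def Approx (x y : G) : Prop := RedTo x y ∧ RedTo y x

/-- `f` satisfies the defining reduction recursion for the class polynomials
`f_{w̃,𝕆}`, written as polynomials in the variable `X = v - v⁻¹`. -/
def ClassPolySystem (f : G → Set G → Polynomial ℤ) : Prop :=
  (∀ x : G, (∀ y : G, ConjTo x y → len x ≤ len y) →
    ∀ O : Set G, IsConjClass O → (x ∈ O → f x O = 1) ∧ (x ∉ O → f x O = 0)) ∧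
  (∀ x x1 s : G, (∃ y : G, ConjTo x y ∧ len y < len x) →
    Approx x x1 → s ∈ simples G → len (s * x1 * s) < len x1 → len x1 = len x →
    ∀ O : Set G, f x O = Polynomial.X * f (s * x1) O + f (s * x1 * s) O)

/-- `y` is `δ`-conjugate to `x`. -/
def DConjTo (δ : G ≃* G) (x y : G) : Prop := ∃ g : G, g * x * (δ g)⁻¹ = y

def dConjClass (δ : G ≃* G) (x : G) : Set G := {y | DConjTo δ x y}

def IsDConjClass (δ : G ≃* G) (S : Set G) : Prop := ∃ x : G, S = dConjClass δ x

def DStepTo (δ : G ≃* G) (x y : G) : Prop :=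
  ∃ s ∈ simples G, y = s * x * (δ s)⁻¹ ∧ len y ≤ len x

def DRedTo (δ : G ≃* G) : G → G → Prop := Relation.ReflTransGen (DStepTo δ)

def DApprox (δ : G ≃* G) (x y : G) : Prop := DRedTo δ x y ∧ DRedTo δ y x

/-- `f` satisfies the `δ`-twisted reduction recursion for the class polynomials
`f_{w̃,𝕆}`, written as polynomials in `X = v - v⁻¹`. -/
def DClassPolySystem (δ : G ≃* G) (f : G → Set G → Polynomial ℤ) : Prop :=
  (∀ x : G, (∀ y : G, DConjTo δ x y → len x ≤ len y) →
    ∀ O : Set G, IsDConjClass δ O → (x ∈ O → f x O = 1) ∧ (x ∉ O → f x O = 0)) ∧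
  (∀ x x1 s : G, (∃ y : G, DConjTo δ x y ∧ len y < len x) →
    DApprox δ x x1 → s ∈ simples G → len (s * x1 * (δ s)⁻¹) < len x1 → len x1 = len x →
    ∀ O : Set G, f x O = Polynomial.X * f (s * x1) O + f (s * x1 * (δ s)⁻¹) O)

/-- The diagram automorphism `δ` of `W̃` of type `A₂`: it fixes `s0`, swaps `s1` and
`s2`, inverts `tau`, swaps the coroot coordinates, and preserves lengths. -/
def IsDiagramAut (δ : G ≃* G) : Prop :=
  δ s0 = s0 ∧ δ s1 = s2 ∧ δ s2 = s1 ∧ δ tau = tau⁻¹ ∧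
  (∀ m n : ℤ, δ (t (m, n)) = t (n, m)) ∧ ∀ g : G, len (δ g) = len g

/-- Elementary strong conjugation. -/
def ElemStrongConj (x y : G) : Prop :=
  len x = len y ∧ ∃ g : G, y = g * x * g⁻¹ ∧
    (len (g * x) = len g + len x ∨ len (x * g⁻¹) = len g + len x)

/-- Strong conjugation: a chain of elementary strong conjugations. -/
def StrongConj : G → G → Prop := Relation.ReflTransGen ElemStrongConj

end A2Data

open A2Data

/-- The affine Hecke algebra attached to `W̃`, over `A = ℤ[v, v⁻¹]`, with standard
basis `T` and the quadratic and braid-type multiplication relations. -/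
class HeckeData (G : Type*) [Group G] [A2Data G] (H : Type*) [Ring H]
    [Algebra (LaurentPolynomial ℤ) H] where
  T : G → H
  T_one : T 1 = 1
  T_mul : ∀ x y : G, len (x * y) = len x + len y → T x * T y = T (x * y)
  T_quad : ∀ s ∈ simples G,
    (T s - algebraMap (LaurentPolynomial ℤ) H (LaurentPolynomial.T 1)) *
      (T s + algebraMap (LaurentPolynomial ℤ) H (LaurentPolynomial.T (-1))) = 0

/-- The commutator `ℤ[v,v⁻¹]`-submodule `[H̃, H̃]`. -/
noncomputable def commSub (H : Type*) [Ring H] [Algebra (LaurentPolynomial ℤ) H] :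
    Submodule (LaurentPolynomial ℤ) H :=
  Submodule.span (LaurentPolynomial ℤ) {z : H | ∃ a b : H, z = a * b - b * a}

/-- The `δ`-twisted commutator `ℤ[v,v⁻¹]`-submodule `[H̃, H̃]_δ`. -/
noncomputable def dCommSub {H : Type*} [Ring H] [Algebra (LaurentPolynomial ℤ) H]
    (δH : H →ₐ[LaurentPolynomial ℤ] H) : Submodule (LaurentPolynomial ℤ) H :=
  Submodule.span (LaurentPolynomial ℤ) {z : H | ∃ a b : H, z = a * b - b * (δH a)}

end A2

/-! If `y = g x g⁻¹` with `ℓ(g x) = ℓ(g) + ℓ(x) = ℓ(g) + ℓ(y)`, then `T_y T_g = T_{g x} = T_g T_x`,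
so once `T_g` is invertible, `T_y - T_x = (T_g T_x) T_g⁻¹ - T_g⁻¹ (T_g T_x)` is a commutator; the
case `ℓ(x g⁻¹) = ℓ(g) + ℓ(x)` is the same with `g⁻¹`, as `ℓ(g⁻¹) = ℓ(g)`. Every `T_g` is
invertible by induction on `ℓ(g)`: `T_s` is by the quadratic relation, `T_g` has inverse
`T_{g⁻¹}` when `ℓ(g) = 0`, and otherwise some simple `s` has `ℓ(s g) = ℓ(g) - 1`, so
`T_g = T_s T_{s g}`. This descent and `ℓ(g⁻¹) = ℓ(g)` are read off the length formula for
`t^λ w τ^j`. -/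

namespace A2

namespace A2Data

variable {G : Type*} [Group G] [A2Data G]

lemma mul_self_of_mem_simples {s : G} (hs : s ∈ simples G) : s * s = 1 := by
  rcases hs with rfl | rfl | rfl
  exacts [s0_sq, s1_sq, s2_sq]

lemma s0_mem_simples : (s0 : G) ∈ simples G := Or.inl rfl
lemma s1_mem_simples : (s1 : G) ∈ simples G := Or.inr (Or.inl rfl)
lemma s2_mem_simples : (s2 : G) ∈ simples G := Or.inr (Or.inr rfl)

lemma s1_inv : (s1 : G)⁻¹ = s1 := inv_eq_of_mul_eq_one_right s1_sq
lemma s2_inv : (s2 : G)⁻¹ = s2 := inv_eq_of_mul_eq_one_right s2_sq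

lemma s1_mul_s1_mul (x : G) : s1 * (s1 * x) = x := by rw [← mul_assoc, s1_sq, one_mul]
lemma s2_mul_s2_mul (x : G) : s2 * (s2 * x) = x := by rw [← mul_assoc, s2_sq, one_mul]

lemma s2_mul_s1_mul_s2_mul (x : G) : s2 * (s1 * (s2 * x)) = s1 * (s2 * (s1 * x)) := by
  have h : (s1 * s2 : G) * (s1 * s2) * (s1 * s2) = 1 := by rw [← pow_three', braid12]
  calc s2 * (s1 * (s2 * x)) = s1 * (s1 * s2 * (s1 * s2) * (s1 * s2)) * (s2 * (s1 * x)) := by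
        simp only [mul_assoc, s1_mul_s1_mul, s2_mul_s2_mul]
    _ = s1 * (s2 * (s1 * x)) := by rw [h, mul_one]

lemma s2_mul_s1_mul_s2 : (s2 : G) * (s1 * s2) = s1 * (s2 * s1) := by
  simpa only [mul_one] using s2_mul_s1_mul_s2_mul (1 : G)

lemma t_zero : (t (0, 0) : G) = 1 :=
  (mul_eq_left (a := (t (0, 0) : G))).mp (by rw [← t_add, Prod.mk_add_mk, add_zero])

lemma t_inv (a : ℤ × ℤ) : (t a : G)⁻¹ = t (-a) :=
  inv_eq_of_mul_eq_one_right (by rw [← t_add, add_neg_cancel, Prod.zero_eq_mk, t_zero])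

lemma t_mul_t_mul (a b : ℤ × ℤ) (x : G) : t a * (t b * x) = t (a + b) * x := by
  rw [← mul_assoc, t_add]

lemma s1_mul_t (m n : ℤ) : (s1 : G) * t (m, n) = t (n - m, n) * s1 := by
  rw [← s1_t, s1_inv, mul_assoc, s1_sq, mul_one]

lemma s2_mul_t (m n : ℤ) : (s2 : G) * t (m, n) = t (m, m - n) * s2 := by
  rw [← s2_t, s2_inv, mul_assoc, s2_sq, mul_one]

lemma s1_mul_t_mul (m n : ℤ) (x : G) : s1 * (t (m, n) * x) = t (n - m, n) * (s1 * x) := by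
  rw [← mul_assoc, s1_mul_t, mul_assoc]

lemma s2_mul_t_mul (m n : ℤ) (x : G) : s2 * (t (m, n) * x) = t (m, m - n) * (s2 * x) := by
  rw [← mul_assoc, s2_mul_t, mul_assoc]

lemma len_one : len (1 : G) = 0 := by
  rw [← t_zero, len_t]; rfl

lemma len_mul_tau_pow (g : G) (j : ℕ) : len (g * tau ^ j) = len g := by
  induction j with
  | zero => rw [pow_zero, mul_one]
  | succ k ih => rw [pow_succ, ← mul_assoc, len_mul_tau, ih]

lemma len_tau_inv_pow_mul (j : ℕ) (g : G) : len (tau⁻¹ ^ j * g) = len g := by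
  induction j generalizing g with
  | zero => rw [pow_zero, one_mul]
  | succ k ih => rw [pow_succ', mul_assoc, ← len_tau_mul, mul_inv_cancel_left, ih]

lemma len_of_mem_simples {s : G} (hs : s ∈ simples G) : len s = 1 := by
  rcases hs with rfl | rfl | rfl
  · rw [s0_def, len_t_s1s2s1]; rfl
  · rw [← one_mul s1, ← t_zero, len_t_s1]; rfl
  · rw [← one_mul s2, ← t_zero, len_t_s2]; rfl

lemma exists_len_simple_mul_lt_of_walls {g : G} (a b : ℤ)
    (h1 : a < 0 → len (s1 * g) + 1 = len g)
    (h2 : 0 ≤ a → b < 0 → len (s2 * g) + 1 = len g)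
    (h0 : 0 ≤ a → 0 ≤ b → len (s0 * g) + 1 = len g) :
    ∃ s ∈ simples G, len (s * g) + 1 = len g := by
  rcases lt_or_ge a 0 with ha | ha
  · exact ⟨s1, s1_mem_simples, h1 ha⟩
  rcases lt_or_ge b 0 with hb | hb
  · exact ⟨s2, s2_mem_simples, h2 ha hb⟩
  · exact ⟨s0, s0_mem_simples, h0 ha hb⟩

-- `s1` lowers the length of `t λ * w` iff `⟨λ, α₁⟩ < [w⁻¹ α₁ < 0]`, `s2` likewise with `α₂`,
-- and `s0` does when neither does.
lemma exists_len_simple_mul_t_mul_lt (m n : ℤ) {w : G}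
    (hw : w ∈ ({1, s1, s2, s1 * s2, s2 * s1, s1 * s2 * s1} : Set G))
    (hpos : 0 < len (t (m, n) * w)) :
    ∃ s ∈ simples G, len (s * (t (m, n) * w)) + 1 = len (t (m, n) * w) := by
  simp only [Set.mem_insert_iff, Set.mem_singleton_iff] at hw
  rcases hw with rfl | rfl | rfl | rfl | rfl | rfl <;>
  [apply exists_len_simple_mul_lt_of_walls (2 * m - n) (2 * n - m);
   apply exists_len_simple_mul_lt_of_walls (2 * m - n - 1) (2 * n - m);
   apply exists_len_simple_mul_lt_of_walls (2 * m - n) (2 * n - m - 1);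
   apply exists_len_simple_mul_lt_of_walls (2 * m - n - 1) (2 * n - m);
   apply exists_len_simple_mul_lt_of_walls (2 * m - n) (2 * n - m - 1);
   apply exists_len_simple_mul_lt_of_walls (2 * m - n - 1) (2 * n - m - 1)] <;>
  intros <;>
  simp only [s0_def, mul_assoc, mul_one, s1_sq, s2_sq, s1_mul_s1_mul, s2_mul_s2_mul,
    s2_mul_s1_mul_s2, s2_mul_s1_mul_s2_mul, s1_mul_t, s2_mul_t, s1_mul_t_mul, s2_mul_t_mul,
    t_mul_t_mul, ← t_add, Prod.mk_add_mk] at hpos ⊢ <;>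
  simp only [← mul_assoc (s1 : G) s2 s1, len_t, len_t_s1, len_t_s2, len_t_s1s2, len_t_s2s1,
    len_t_s1s2s1] at hpos ⊢ <;>
  omega

lemma exists_len_simple_mul_lt {g : G} (hpos : 0 < len g) :
    ∃ s ∈ simples G, len (s * g) + 1 = len g := by
  obtain ⟨m, n, w, j, hw, rfl⟩ := decomp g
  rw [len_mul_tau_pow] at hpos ⊢
  obtain ⟨s, hs, hdesc⟩ := exists_len_simple_mul_t_mul_lt m n hw hpos
  exact ⟨s, hs, by rw [← mul_assoc, len_mul_tau_pow, hdesc]⟩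

lemma len_inv (g : G) : len g⁻¹ = len g := by
  obtain ⟨m, n, w, j, hw, rfl⟩ := decomp g
  rw [mul_inv_rev, ← inv_pow, len_tau_inv_pow_mul, mul_inv_rev, t_inv, Prod.neg_mk,
    len_mul_tau_pow]
  simp only [Set.mem_insert_iff, Set.mem_singleton_iff] at hw
  rcases hw with rfl | rfl | rfl | rfl | rfl | rfl <;>
  simp only [inv_one, mul_inv_rev, s1_inv, s2_inv, mul_assoc, one_mul, mul_one, s1_mul_t,
    s2_mul_t, s1_mul_t_mul, s2_mul_t_mul] <;>
  simp only [← mul_assoc (s1 : G) s2 s1, len_t, len_t_s1, len_t_s2, len_t_s1s2, len_t_s2s1,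
    len_t_s1s2s1] <;>
  omega

end A2Data

open A2Data HeckeData

lemma sub_mem_commSub_of_semiconjBy {H : Type*} [Ring H] [Algebra (LaurentPolynomial ℤ) H]
    {u a b : H} (hu : IsUnit u) (h : SemiconjBy u b a) : a - b ∈ commSub H := by
  obtain ⟨u, rfl⟩ := hu
  refine Submodule.subset_span ⟨u * b, ↑u⁻¹, ?_⟩
  rw [Units.inv_mul_cancel_left, h.eq, Units.mul_inv_cancel_right]

section Hecke

variable {G : Type*} [Group G] [A2Data G]
variable {H : Type*} [Ring H] [Algebra (LaurentPolynomial ℤ) H] [HeckeData G H]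

lemma isUnit_T_of_mem_simples {s : G} (hs : s ∈ simples G) : IsUnit (T s : H) := by
  set v : H := algebraMap (LaurentPolynomial ℤ) H (LaurentPolynomial.T 1)
  set v' : H := algebraMap (LaurentPolynomial ℤ) H (LaurentPolynomial.T (-1))
  have hvv' : v * v' = 1 := by
    rw [← map_mul, ← LaurentPolynomial.T_add, add_neg_cancel, LaurentPolynomial.T_zero, map_one]
  have hv : Commute v (T s) := Algebra.commutes _ _
  have hv' : Commute v' (T s) := Algebra.commutes _ _
  have hinv : T s * (T s + v' - v) = 1 := by
    calc T s * (T s + v' - v) = (T s - v) * (T s + v') + v * v' + (v * T s - T s * v) := by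
          noncomm_ring
      _ = 1 := by rw [T_quad s hs, hvv', hv.eq, sub_self, zero_add, add_zero]
  have hcomm : Commute (T s) (T s + v' - v) :=
    ((Commute.refl _).add_right hv'.symm).sub_right hv.symm
  exact ⟨⟨T s, T s + v' - v, hinv, hcomm.eq ▸ hinv⟩, rfl⟩

lemma isUnit_T_of_len_eq_zero {g : G} (hg : len g = 0) : IsUnit (T g : H) := by
  have hinv : len (g * g⁻¹) = len g + len g⁻¹ := by rw [mul_inv_cancel, len_one, len_inv, hg]
  have hinv' : len (g⁻¹ * g) = len g⁻¹ + len g := by rw [inv_mul_cancel, len_one, len_inv, hg]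
  refine ⟨⟨T g, T g⁻¹, ?_, ?_⟩, rfl⟩
  · rw [T_mul _ _ hinv, mul_inv_cancel, T_one]
  · rw [T_mul _ _ hinv', inv_mul_cancel, T_one]

lemma isUnit_T (g : G) : IsUnit (T g : H) := by
  induction hn : len g using Nat.strong_induction_on generalizing g with
  | _ n ih =>
    rcases Nat.eq_zero_or_pos n with rfl | hpos
    · exact isUnit_T_of_len_eq_zero hn
    obtain ⟨s, hs, hdesc⟩ := exists_len_simple_mul_lt (hn ▸ hpos)
    have hg : s * (s * g) = g := by rw [← mul_assoc, mul_self_of_mem_simples hs, one_mul]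
    have hadd : len (s * (s * g)) = len s + len (s * g) := by
      rw [hg, len_of_mem_simples hs]; omega
    rw [← hg, ← T_mul _ _ hadd]
    exact (isUnit_T_of_mem_simples hs).mul (ih _ (by omega) _ rfl)

lemma semiconjBy_T_of_mul_eq {g x y : G} (hyx : y * g = g * x)
    (hgx : len (g * x) = len g + len x) (hlen : len y = len x) :
    SemiconjBy (T g : H) (T x) (T y) := by
  have hyg : len (y * g) = len y + len g := by rw [hyx, hgx, hlen, add_comm]
  rw [SemiconjBy, T_mul _ _ hgx, T_mul _ _ hyg, hyx]

lemma sub_mem_commSub_of_elemStrongConj {x y : G} (h : ElemStrongConj x y) :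
    (T x : H) - T y ∈ commSub H := by
  obtain ⟨hlen, g, rfl, hgx | hxg⟩ := h
  · rw [sub_mem_comm_iff]
    exact sub_mem_commSub_of_semiconjBy (isUnit_T g)
      (semiconjBy_T_of_mul_eq (inv_mul_cancel_right _ _) hgx hlen.symm)
  · have hxg' : x * g⁻¹ = g⁻¹ * (g * x * g⁻¹) := by group
    have hadd : len (g⁻¹ * (g * x * g⁻¹)) = len g⁻¹ + len (g * x * g⁻¹) := by
      rw [← hxg', hxg, len_inv, hlen, add_comm]
    exact sub_mem_commSub_of_semiconjBy (isUnit_T g⁻¹) (semiconjBy_T_of_mul_eq hxg' hadd hlen)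

end Hecke

end A2

open A2 A2Data in
/-- If `x` and `y` are strongly conjugate in `W̃`, then `T_x ≡ T_y` modulo the
commutator submodule `[H̃, H̃]`. -/
theorem statement_8 {G : Type*} [Group G] [A2Data G]
    {H : Type*} [Ring H] [Algebra (LaurentPolynomial ℤ) H] [HeckeData G H]
    (x y : G) (h : StrongConj x y) :
    (HeckeData.T x : H) - HeckeData.T y ∈ commSub H := by
  induction h with
  | refl => rw [sub_self]; exact zero_mem _
  | tail _ hyz ih =>
    rw [← sub_add_sub_cancel]
    exact add_mem ih (sub_mem_commSub_of_elemStrongConj hyz)
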